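/- If f ∈ F_{A,B}(q), then ∑_{n=1}^{q} f(n) = 0. -/

import Mathlib

open Finset hiding sum_eq_zero

/-- `f` belongs to the class `F_{A,B}(q)`: it is bounded by `A`, periodic with period `q`,
and satisfies `∑_{n=1}^{q} |∑_{k=1}^{K} f(n+k)|² ≤ B·q·K` for every natural `K ≥ 1`. -/
def MemF (A B : ℝ) (q : ℕ) (f : ℤ → ℂ) : Prop :=
  (∀ n : ℤ, ‖f n‖ ≤ A) ∧
  (∀ n : ℤ, f (n + (q : ℤ)) = f n) ∧
  (∀ K : ℕ, 1 ≤ K →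
    ∑ n ∈ Finset.Icc (1 : ℤ) (q : ℤ),
      ‖∑ k ∈ Finset.Icc (1 : ℤ) (K : ℤ), f (n + k)‖ ^ 2 ≤ B * q * K)

/-! Every block of `q` consecutive values of a `q`-periodic `f` sums to `S = ∑_{n=1}^q f(n)`.
Taking `K = m q` in condition (iii) therefore gives `q (m ‖S‖)² ≤ B q (m q)`, that is,
`m ‖S‖² ≤ B q` for every `m ≥ 1`, which forces `S = 0`. -/

lemma Int.sum_Icc_one_eq_sum_range {M : Type*} [AddCommMonoid M] (g : ℤ → M) (K : ℕ) :
    ∑ k ∈ Icc (1 : ℤ) K, g k = ∑ i ∈ Finset.range K, g (1 + i) := by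
  simp [Int.Icc_eq_finset_map]

namespace Function.Periodic

variable {M : Type*} [AddCancelCommMonoid M] {g : ℤ → M} {q : ℕ}

theorem sum_range_const_add (hg : Periodic g q) (a : ℤ) :
    ∑ i ∈ range q, g (a + i) = ∑ i ∈ range q, g i := by
  have shift_one : ∀ b : ℤ, ∑ i ∈ range q, g (b + 1 + i) = ∑ i ∈ range q, g (b + i) := by
    intro b
    have h := (sum_range_succ' (fun i ↦ g (b + i)) q).symm.trans
      (sum_range_succ (fun i ↦ g (b + i)) q)
    simp only [Nat.cast_add, Nat.cast_one, Nat.cast_zero, add_zero, hg b] at h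
    simpa only [add_assoc, add_comm (1 : ℤ)] using add_right_cancel h
  induction a using Int.induction_on with
  | zero => simp
  | succ b ih => rw [shift_one, ih]
  | pred b ih => rw [← ih, ← shift_one, sub_add_cancel]

theorem sum_range_nat_mul_add (hg : Periodic g q) (a : ℤ) (m : ℕ) :
    ∑ i ∈ range (m * q), g (a + i) = m • ∑ i ∈ range q, g i := by
  induction m with
  | zero => simp
  | succ m ih =>
    rw [add_mul, one_mul, Finset.sum_range_add, ih, succ_nsmul]
    simpa [add_assoc] using hg.sum_range_const_add (a + (m * q : ℕ))

theorem sum_Icc_nat_mul_add (hg : Periodic g q) (n : ℤ) (m : ℕ) :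
    ∑ k ∈ Icc (1 : ℤ) (m * q : ℕ), g (n + k) = m • ∑ k ∈ Icc (1 : ℤ) q, g k := by
  rw [Int.sum_Icc_one_eq_sum_range, Int.sum_Icc_one_eq_sum_range]
  simp only [← add_assoc, hg.sum_range_nat_mul_add, hg.sum_range_const_add]

end Function.Periodic

lemma eq_zero_of_forall_nat_mul_le {K : Type*} [Field K] [LinearOrder K] [IsStrictOrderedRing K]
    [Archimedean K] {x C : K} (hx : 0 ≤ x) (h : ∀ m : ℕ, 1 ≤ m → m * x ≤ C) :
    x = 0 := by
  by_contra hne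
  have hpos : 0 < x := hx.lt_of_ne' hne
  obtain ⟨m, hm⟩ := exists_nat_gt (C / x)
  have := h (m + 1) (by omega)
  rw [div_lt_iff₀ hpos] at hm
  push_cast at this
  nlinarith

theorem sum_eq_zero_general (A B : ℝ) (q : ℕ) (hq1 : 1 ≤ q)
    (f : ℤ → ℂ) (hf : MemF A B q f) :
    ∑ n ∈ Finset.Icc (1 : ℤ) (q : ℤ), f n = 0 := by
  obtain ⟨-, hper, hsq⟩ := hf
  set S := ∑ n ∈ Icc (1 : ℤ) q, f n
  have hq : (0 : ℝ) < q := by exact_mod_cast hq1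
  have hbound : ∀ m : ℕ, 1 ≤ m → m * ‖S‖ ^ 2 ≤ B * q := by
    intro m hm
    have h := hsq (m * q) (Nat.one_le_iff_ne_zero.mpr (by positivity))
    simp only [Function.Periodic.sum_Icc_nat_mul_add hper, nsmul_eq_mul, norm_mul,
      Complex.norm_natCast, sum_const, Int.card_Icc, add_sub_cancel_right, Int.toNat_natCast] at h
    push_cast at h
    have hm' : (0 : ℝ) < m := by exact_mod_cast hm
    refine le_of_mul_le_mul_left ?_ (mul_pos hq hm')
    linear_combination h
  exact norm_eq_zero.mp (pow_eq_zero_iff two_ne_zero |>.mp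
    (eq_zero_of_forall_nat_mul_le (sq_nonneg _) hbound))

/-- If `f ∈ F_{A,B}(q)`, then `∑_{n=1}^{q} f(n) = 0`. -/
theorem sum_eq_zero (A B : ℝ) (hA : 0 < A) (hB : 0 < B) (q : ℕ) (hq1 : 1 ≤ q)
    (f : ℤ → ℂ) (hf : MemF A B q f) :
    ∑ n ∈ Finset.Icc (1 : ℤ) (q : ℤ), f n = 0 :=
  sum_eq_zero_general A B q hq1 f hf
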